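/- For every ω ∈ Ω, every n, and every word v of length n, the subgroup L_{n,ω} acts level transitively on the subtree vX*: for every m and any two words u₁, u₂ of length m, there exists h ∈ L_{n,ω} with h(vu₁) = vu₂. -/

import Mathlib

/-!  Common setup: the group `Aut(X*)` of automorphisms of the rooted binary tree,
the Grigorchuk generators `a, b_ω, c_ω, d_ω`, and the subgroups `G_ω`, `L_ω`. -/

/-- Finite words over `X = {0,1}`: vertices of the rooted binary tree. -/
abbrev Word := List Bool

/-- `Aut(X*)`: bijections of the set of words which preserve word length
(hence fix the empty word) and preserve the prefix relation, as a subgroup of the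
permutation group of `Word`. -/
def TreeAut : Subgroup (Equiv.Perm Word) where
  carrier := {g | (∀ w : Word, (g w).length = w.length) ∧
      ∀ u v : Word, u <+: v ↔ g u <+: g v}
  one_mem' := ⟨fun _ => rfl, fun _ _ => Iff.rfl⟩
  mul_mem' := by
    rintro g h ⟨hg1, hg2⟩ ⟨hh1, hh2⟩
    refine ⟨fun w => ?_, fun u v => ?_⟩
    · simpa using (hg1 (h w)).trans (hh1 w)
    · simpa using (hh2 u v).trans (hg2 (h u) (h v))
  inv_mem' := by
    rintro g ⟨hg1, hg2⟩
    refine ⟨fun w => ?_, fun u v => ?_⟩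
    · have := hg1 (g⁻¹ w)
      rw [Equiv.Perm.coe_inv, Equiv.apply_symm_apply] at this
      exact this.symm
    · have := (hg2 (g⁻¹ u) (g⁻¹ v)).symm
      simpa using this

/-- Application of a tree automorphism to a word. -/
def ap (g : ↥TreeAut) (w : Word) : Word := (g : Equiv.Perm Word) w

/-- The root permutation `a` (as a map): `a(0v) = 1v`, `a(1v) = 0v`. -/
def aFun : Word → Word
  | [] => []
  | x :: v => (!x) :: v

/-- The common recursive pattern of the maps `b_ω, c_ω, d_ω`: on `0v` act by the
identity if `ω 0 = k` and by `a` otherwise, on `1v` recurse with the shifted sequence.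
(`k = 2` gives `b`, `k = 1` gives `c`, `k = 0` gives `d`.) -/
def genFun (k : Fin 3) : (ℕ → Fin 3) → Word → Word
  | _, [] => []
  | ω, false :: v => false :: (if ω 0 = k then v else aFun v)
  | ω, true :: v => true :: genFun k (fun n => ω (n + 1)) v

lemma aFun_invol : Function.Involutive aFun := by
  intro w; cases w with
  | nil => rfl
  | cons x v => simp [aFun]

lemma aFun_length : ∀ w : Word, (aFun w).length = w.length := by
  intro w; cases w <;> simp [aFun]

lemma aFun_prefix : ∀ u v : Word, u <+: v → aFun u <+: aFun v := by
  intro u v h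
  cases u with
  | nil => simp [aFun]
  | cons x u' =>
    cases v with
    | nil => simp at h
    | cons y v' =>
      rw [List.cons_prefix_cons] at h
      obtain ⟨rfl, h2⟩ := h
      simpa [aFun, List.cons_prefix_cons] using h2

lemma genFun_length (k : Fin 3) : ∀ (w : Word) (ω : ℕ → Fin 3),
    (genFun k ω w).length = w.length
  | [], _ => rfl
  | false :: v, ω => by
    by_cases h : ω 0 = k <;> simp [genFun, h, aFun_length]
  | true :: v, ω => by
    simp [genFun, genFun_length k v]

lemma genFun_invol (k : Fin 3) : ∀ (w : Word) (ω : ℕ → Fin 3),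
    genFun k ω (genFun k ω w) = w
  | [], _ => rfl
  | false :: v, ω => by
    by_cases h : ω 0 = k <;> simp [genFun, h, aFun_invol v]
  | true :: v, ω => by
    simp [genFun, genFun_invol k v]

lemma genFun_prefix (k : Fin 3) : ∀ (u v : Word) (ω : ℕ → Fin 3),
    u <+: v → genFun k ω u <+: genFun k ω v
  | [], v, ω, _ => by simp [genFun]
  | x :: u', [], ω, h => by simp at h
  | x :: u', y :: v', ω, h => by
    rw [List.cons_prefix_cons] at h
    obtain ⟨rfl, h2⟩ := h
    cases x with
    | false =>
      by_cases h0 : ω 0 = k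
      · simpa [genFun, h0, List.cons_prefix_cons] using h2
      · simpa [genFun, h0, List.cons_prefix_cons] using aFun_prefix u' v' h2
    | true =>
      simpa [genFun, List.cons_prefix_cons] using genFun_prefix k u' v' _ h2

/-- Build an element of `Aut(X*)` from an involutive, length-preserving,
prefix-preserving map. -/
def mkAut (f : Word → Word) (hinv : Function.Involutive f)
    (hlen : ∀ w, (f w).length = w.length)
    (hpre : ∀ u v : Word, u <+: v → f u <+: f v) : ↥TreeAut :=
  ⟨hinv.toPerm, by
    refine ⟨fun w => ?_, fun u v => ⟨fun h => ?_, fun h => ?_⟩⟩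
    · simpa using hlen w
    · simpa using hpre u v h
    · have := hpre _ _ (by simpa using h)
      simpa [hinv u, hinv v] using this⟩

/-- The automorphism `a`. -/
def aAut : ↥TreeAut := mkAut aFun aFun_invol aFun_length aFun_prefix

/-- The automorphism `b_ω`. -/
def bAut (ω : ℕ → Fin 3) : ↥TreeAut :=
  mkAut (genFun 2 ω) (fun w => genFun_invol 2 w ω) (fun w => genFun_length 2 w ω)
    (fun u v h => genFun_prefix 2 u v ω h)

/-- The automorphism `c_ω`. -/
def cAut (ω : ℕ → Fin 3) : ↥TreeAut :=
  mkAut (genFun 1 ω) (fun w => genFun_invol 1 w ω) (fun w => genFun_length 1 w ω)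
    (fun u v h => genFun_prefix 1 u v ω h)

/-- The automorphism `d_ω`. -/
def dAut (ω : ℕ → Fin 3) : ↥TreeAut :=
  mkAut (genFun 0 ω) (fun w => genFun_invol 0 w ω) (fun w => genFun_length 0 w ω)
    (fun u v h => genFun_prefix 0 u v ω h)

/-- `G_ω = ⟨a, b_ω, c_ω, d_ω⟩`. -/
def Ggrp (ω : ℕ → Fin 3) : Subgroup ↥TreeAut :=
  Subgroup.closure {aAut, bAut ω, cAut ω, dAut ω}

/-- `L_ω = ⟨a b_ω, d_ω⟩`. -/
def Lgrp (ω : ℕ → Fin 3) : Subgroup ↥TreeAut :=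
  Subgroup.closure {aAut * bAut ω, dAut ω}

/-- The `n`-fold shift `σⁿω`. -/
def shift (n : ℕ) (ω : ℕ → Fin 3) : ℕ → Fin 3 := fun m => ω (m + n)

/-- `Ω_∞`: sequences in which each of `0, 1, 2` occurs infinitely often. -/
def OmegaInf : Set (ℕ → Fin 3) := {ω | ∀ k : Fin 3, ∀ N : ℕ, ∃ n, N ≤ n ∧ ω n = k}

/-- `g` fixes every word of length `n`. -/
def fixesLevel (g : ↥TreeAut) (n : ℕ) : Prop := ∀ w : Word, w.length = n → ap g w = w

/-- The subgroup of all tree automorphisms acting trivially outside the subtree `uX*`. -/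
def ristSubgroup (u : Word) : Subgroup ↥TreeAut where
  carrier := {g | ∀ w : Word, ¬ u <+: w → ap g w = w}
  one_mem' := by intro w _; rfl
  mul_mem' := by
    intro g h hg hh w hw
    have e1 : ap g w = w := hg w hw
    have e2 : ap h w = w := hh w hw
    simp only [ap] at e1 e2
    show (g : Equiv.Perm Word) ((h : Equiv.Perm Word) w) = w
    rw [e2, e1]
  inv_mem' := by
    intro g hg w hw
    have h1' : ap g w = w := hg w hw
    have h1 : (g : Equiv.Perm Word) w = w := h1'
    show ((g : Equiv.Perm Word))⁻¹ w = w
    conv_lhs => rw [← h1]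
    simp

/-- The subgroup of all tree automorphisms fixing every word of length `n`
(the `n`-th level stabilizer in `Aut(X*)`). -/
def levelStab (n : ℕ) : Subgroup ↥TreeAut where
  carrier := {g | fixesLevel g n}
  one_mem' := by intro w _; rfl
  mul_mem' := by
    intro g h hg hh w hw
    have e1 : ap g w = w := hg w hw
    have e2 : ap h w = w := hh w hw
    simp only [ap] at e1 e2
    show (g : Equiv.Perm Word) ((h : Equiv.Perm Word) w) = w
    rw [e2, e1]
  inv_mem' := by
    intro g hg w hw
    have h1' : ap g w = w := hg w hw
    have h1 : (g : Equiv.Perm Word) w = w := h1'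
    show ((g : Equiv.Perm Word))⁻¹ w = w
    conv_lhs => rw [← h1]
    simp

/-- The rigid level stabilizer `Rist_G(n)`: the subgroup generated by the rigid vertex
stabilizers `Rist_G(u) = G ⊓ ristSubgroup u` over all words `u` of length `n`. -/
def ristLevel (G : Subgroup ↥TreeAut) (n : ℕ) : Subgroup ↥TreeAut :=
  ⨆ u ∈ {u : Word | u.length = n}, G ⊓ ristSubgroup u

/-- `G` acts transitively on each level of the tree. -/
def LevelTransitive (G : Subgroup ↥TreeAut) : Prop :=
  ∀ u v : Word, u.length = v.length → ∃ g ∈ G, ap g u = v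

/-- A set of tree automorphisms acts level transitively on the subtree `vX*`. -/
def LevelTransitiveOn (S : Set ↥TreeAut) (v : Word) : Prop :=
  ∀ u₁ u₂ : Word, u₁.length = u₂.length → ∃ g ∈ S, ap g (v ++ u₁) = v ++ u₂

/-- `L_{n,ω}`: `L_{0,ω} = L_ω` and `L_{n,ω}` is generated by the squares of
elements of `L_{n-1,ω}`. -/
def Lsq (ω : ℕ → Fin 3) : ℕ → Subgroup ↥TreeAut
  | 0 => Lgrp ω
  | n + 1 => Subgroup.closure {x | ∃ y ∈ Lsq ω n, x = y * y}

/-- `g` is active at the word `v`: the section `g_v` acts nontrivially on the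
one-letter words. -/
def IsActive (g : ↥TreeAut) (v : Word) : Prop :=
  ap g (v ++ [false]) ≠ ap g v ++ [false]

open scoped Classical in
/-- `p(g)_n`: the number of words of length `n` at which `g` is active, mod 2
(words of length `n` are enumerated as `List.ofFn f` for `f : Fin n → Bool`). -/
noncomputable def pMap (g : ↥TreeAut) (n : ℕ) : ZMod 2 :=
  (((Finset.univ : Finset (Fin n → Bool)).filter
    (fun f => IsActive g (List.ofFn f))).card : ZMod 2)

/-! Write `g_0, g_1, g_2` for `d_ω, c_ω, b_ω`, so that `L_ω = ⟨a g_2, g_0⟩`, and consider more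
generally `⟨a g_s, g_t⟩` for `s ≠ t`. The squares `(a g_s)²`, `(a g_s g_t)²`, `(g_t a g_s g_t)²`
fix the first level, and products of them have as sections at a vertex `x ∈ {0, 1}` the
generators of a group `⟨a g_{s'}, g_{t'}⟩` for `σω`, conjugated by `1` or by `g_{s,σω}`: a case check
on `ω₀`, using `g_s g_t = g_r` for `{s, t, r} = {0, 1, 2}`. As the section of `h²` is the square of
the section of `h`, the `n`-th iterated squares of the group for `σω` lift in the same way into
the `(n+1)`-st ones for `ω`. By induction on `|u|`, `L_{n,ω}` thus contains, for every word `u`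
with `n ≤ |u|`, an element fixing `u` and swapping its two children; such elements at all
vertices below `v` make `L_{n,ω}` transitive on every level of `vX*`. -/

section Squares

variable {G G' : Type*} [Group G] [Group G']

def squaresSubgroup (H : Subgroup G) : Subgroup G :=
  Subgroup.closure {x | ∃ y ∈ H, x = y * y}

lemma mul_self_mem_squaresSubgroup {H : Subgroup G} {y : G} (hy : y ∈ H) :
    y * y ∈ squaresSubgroup H :=
  Subgroup.subset_closure ⟨y, hy, rfl⟩

lemma squaresSubgroup_le (H : Subgroup G) : squaresSubgroup H ≤ H :=
  (Subgroup.closure_le _).2 fun _ ⟨_, hy, hx⟩ => hx ▸ mul_mem hy hy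

lemma squaresSubgroup_mono : Monotone (squaresSubgroup (G := G)) :=
  fun _ _ hHK => (Subgroup.closure_le _).2 fun _ ⟨_, hy, hx⟩ =>
    hx ▸ mul_self_mem_squaresSubgroup (hHK hy)

lemma map_squaresSubgroup_le (f : G →* G') (H : Subgroup G) :
    (squaresSubgroup H).map f ≤ squaresSubgroup (H.map f) := by
  rw [Subgroup.map_le_iff_le_comap, squaresSubgroup, Subgroup.closure_le]
  rintro _ ⟨y, hy, rfl⟩
  simpa using mul_self_mem_squaresSubgroup (Subgroup.mem_map_of_mem f hy)

lemma antitone_iterate_squaresSubgroup (H : Subgroup G) :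
    Antitone fun n => squaresSubgroup^[n] H :=
  antitone_nat_of_succ_le fun n => by
    rw [Function.iterate_succ_apply']
    exact squaresSubgroup_le _

end Squares

section TreeAut

@[simp] lemma ap_mul (g h : ↥TreeAut) (w : Word) : ap (g * h) w = ap g (ap h w) := rfl

@[simp] lemma ap_one (w : Word) : ap 1 w = w := rfl

@[simp] lemma ap_inv_ap (g : ↥TreeAut) (w : Word) : ap g⁻¹ (ap g w) = w :=
  (g : Equiv.Perm Word).symm_apply_apply w

lemma ap_injective (g : ↥TreeAut) : Function.Injective (ap g) := (g : Equiv.Perm Word).injective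

@[simp] lemma length_ap (g : ↥TreeAut) (w : Word) : (ap g w).length = w.length := g.2.1 w

@[simp] lemma ap_nil (g : ↥TreeAut) : ap g [] = [] :=
  List.eq_nil_of_length_eq_zero (length_ap g [])

lemma ap_prefix (g : ↥TreeAut) {u w : Word} (h : u <+: w) : ap g u <+: ap g w :=
  (g.2.2 u w).1 h

lemma exists_ap_append_singleton (g : ↥TreeAut) (u : Word) (c : Bool) :
    ∃ c', ap g (u ++ [c]) = ap g u ++ [c'] := by
  obtain ⟨t, ht⟩ := ap_prefix g (List.prefix_append u [c])
  have ht1 : t.length = 1 := by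
    have := congrArg List.length ht
    simp only [List.length_append, length_ap, List.length_singleton] at this
    omega
  obtain ⟨c', rfl⟩ := List.length_eq_one_iff.1 ht1
  exact ⟨c', ht.symm⟩

lemma ap_append_singleton_not {g : ↥TreeAut} {u : Word} {c c' : Bool}
    (h : ap g (u ++ [c]) = ap g u ++ [c']) : ap g (u ++ [!c]) = ap g u ++ [!c'] := by
  obtain ⟨d, hd⟩ := exists_ap_append_singleton g u (!c)
  have hdc : d ≠ c' := by
    rintro rfl
    have := ap_injective g (hd.trans h.symm)
    simp at this
  rw [hd, Bool.eq_not_of_ne hdc]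

def SwapsChildren (g : ↥TreeAut) (u : Word) : Prop :=
  ∀ c, ap g (u ++ [c]) = u ++ [!c]

lemma SwapsChildren.conj {l : ↥TreeAut} (κ : ↥TreeAut) {u : Word}
    (hl : SwapsChildren l (ap κ⁻¹ u)) : SwapsChildren (κ * l * κ⁻¹) u := by
  intro c
  obtain ⟨c', hc'⟩ := exists_ap_append_singleton κ⁻¹ u c
  have hκ := ap_inv_ap κ⁻¹ (u ++ [!c])
  rw [inv_inv] at hκ
  rw [ap_mul, ap_mul, hc', hl, ← ap_append_singleton_not hc', hκ]

lemma LevelTransitiveOn.of_swapsChildren {H : Subgroup ↥TreeAut} {v : Word}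
    (hswap : ∀ u, ∃ h ∈ H, SwapsChildren h (v ++ u)) :
    LevelTransitiveOn (H : Set ↥TreeAut) v := by
  intro u₁
  induction u₁ using List.reverseRecOn with
  | nil =>
    intro u₂ hu₂
    rw [List.eq_nil_of_length_eq_zero hu₂.symm]
    exact ⟨1, H.one_mem, rfl⟩
  | append_singleton t₁ c₁ ih =>
    intro u₂ hu₂
    obtain ⟨t₂, c₂, rfl⟩ : ∃ t₂ c₂, u₂ = t₂ ++ [c₂] := by
      rcases List.eq_nil_or_concat u₂ with rfl | ⟨t₂, c₂, rfl⟩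
      · simp at hu₂
      · exact ⟨t₂, c₂, List.concat_eq_append⟩
    obtain ⟨g, hg, hgt⟩ := ih t₂ (by simpa using hu₂)
    obtain ⟨c, hc⟩ := exists_ap_append_singleton g (v ++ t₁) c₁
    rw [hgt] at hc
    simp only [← List.append_assoc]
    by_cases hcc : c = c₂
    · exact ⟨g, hg, by rw [hc, hcc]⟩
    · obtain ⟨h, hh, hswap⟩ := hswap t₂
      refine ⟨h * g, mul_mem hh hg, ?_⟩
      rw [ap_mul, hc, hswap, Bool.eq_not_of_ne hcc, Bool.not_not]

end TreeAut

section Sections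

def sectionsAt (H : Subgroup ↥TreeAut) (x : Bool) : Subgroup ↥TreeAut where
  carrier := {l | ∃ h ∈ H, ∀ w, ap h (x :: w) = x :: ap l w}
  one_mem' := ⟨1, H.one_mem, fun _ => rfl⟩
  mul_mem' := by
    rintro l₁ l₂ ⟨h₁, hh₁, e₁⟩ ⟨h₂, hh₂, e₂⟩
    exact ⟨h₁ * h₂, mul_mem hh₁ hh₂, fun w => by rw [ap_mul, e₂, e₁, ap_mul]⟩
  inv_mem' := by
    rintro l ⟨h, hh, e⟩
    refine ⟨h⁻¹, inv_mem hh, fun w => ?_⟩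
    apply ap_injective h
    rw [← ap_mul, mul_inv_cancel, ap_one, e, ← ap_mul, mul_inv_cancel, ap_one]

lemma squaresSubgroup_sectionsAt_le (H : Subgroup ↥TreeAut) (x : Bool) :
    squaresSubgroup (sectionsAt H x) ≤ sectionsAt (squaresSubgroup H) x := by
  rw [squaresSubgroup, Subgroup.closure_le]
  rintro _ ⟨l, ⟨h, hh, e⟩, rfl⟩
  exact ⟨h * h, mul_self_mem_squaresSubgroup hh, fun w => by rw [ap_mul, e, e, ap_mul]⟩

lemma map_iterate_squaresSubgroup_le_sectionsAt {H K : Subgroup ↥TreeAut}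
    {f : ↥TreeAut →* ↥TreeAut} {x : Bool} (hf : K.map f ≤ sectionsAt H x) (n : ℕ) :
    (squaresSubgroup^[n] K).map f ≤ sectionsAt (squaresSubgroup^[n] H) x := by
  induction n with
  | zero => exact hf
  | succ n ih =>
    simp only [Function.iterate_succ_apply']
    exact (map_squaresSubgroup_le f _).trans
      ((squaresSubgroup_mono ih).trans (squaresSubgroup_sectionsAt_le _ x))

lemma SwapsChildren.cons {h l : ↥TreeAut} {x : Bool} {u : Word}
    (hsec : ∀ w, ap h (x :: w) = x :: ap l w) (hl : SwapsChildren l u) :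
    SwapsChildren h (x :: u) :=
  fun c => by rw [List.cons_append, hsec, hl, List.cons_append]

end Sections

section Generators

def gAut (k : Fin 3) (ω : ℕ → Fin 3) : ↥TreeAut :=
  mkAut (genFun k ω) (fun w => genFun_invol k w ω) (fun w => genFun_length k w ω)
    (fun u v h => genFun_prefix k u v ω h)

def lGroup (s t : Fin 3) (ω : ℕ → Fin 3) : Subgroup ↥TreeAut :=
  Subgroup.closure {aAut * gAut s ω, gAut t ω}

lemma Lsq_eq_iterate_squaresSubgroup (ω : ℕ → Fin 3) (n : ℕ) :
    Lsq ω n = squaresSubgroup^[n] (lGroup 2 0 ω) := by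
  induction n with
  | zero => rfl
  | succ n ih => rw [Function.iterate_succ_apply', ← ih]; rfl

@[simp] lemma ap_aAut_cons (x : Bool) (w : Word) : ap aAut (x :: w) = (!x) :: w := rfl

@[simp] lemma ap_gAut_false_cons (k : Fin 3) (ω : ℕ → Fin 3) (w : Word) :
    ap (gAut k ω) (false :: w) = false :: (if ω 0 = k then w else ap aAut w) := rfl

@[simp] lemma ap_gAut_true_cons (k : Fin 3) (ω : ℕ → Fin 3) (w : Word) :
    ap (gAut k ω) (true :: w) = true :: ap (gAut k (shift 1 ω)) w := rfl

@[simp] lemma ap_aAut_aAut (w : Word) : ap aAut (ap aAut w) = w := aFun_invol w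

@[simp] lemma ap_gAut_gAut (k : Fin 3) (ω : ℕ → Fin 3) (w : Word) :
    ap (gAut k ω) (ap (gAut k ω) w) = w := genFun_invol k w ω

@[simp] lemma gAut_inv (k : Fin 3) (ω : ℕ → Fin 3) : (gAut k ω)⁻¹ = gAut k ω :=
  inv_eq_of_mul_eq_one_left (Subtype.ext (Equiv.ext (ap_gAut_gAut k ω)))

@[simp] lemma aAut_inv : aAut⁻¹ = aAut :=
  inv_eq_of_mul_eq_one_left (Subtype.ext (Equiv.ext ap_aAut_aAut))

lemma ap_gAut_gAut_of_ne (k₁ k₂ k₃ : Fin 3) (h₁₂ : k₁ ≠ k₂) (h₁₃ : k₁ ≠ k₃) (h₂₃ : k₂ ≠ k₃) :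
    ∀ (ω : ℕ → Fin 3) (w : Word), ap (gAut k₁ ω) (ap (gAut k₂ ω) w) = ap (gAut k₃ ω) w
  | _, [] => rfl
  | ω, false :: w => by
    have : ω 0 = k₁ ∨ ω 0 = k₂ ∨ ω 0 = k₃ := by omega
    rcases this with h | h | h <;> subst h <;>
      simp [h₁₂, h₁₃, h₂₃, h₁₂.symm, h₁₃.symm, h₂₃.symm]
  | ω, true :: w => by simp [ap_gAut_gAut_of_ne k₁ k₂ k₃ h₁₂ h₁₃ h₂₃ _ w]

end Generators

section Lift

variable {s t : Fin 3} {ω : ℕ → Fin 3}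

lemma lGroup_map_conj_le_sectionsAt {s' t' : Fin 3} {ω' : ℕ → Fin 3} {κ : ↥TreeAut}
    {H : Subgroup ↥TreeAut} {x : Bool}
    (hX : κ * (aAut * gAut s' ω') * κ⁻¹ ∈ sectionsAt H x)
    (hT : κ * gAut t' ω' * κ⁻¹ ∈ sectionsAt H x) :
    (lGroup s' t' ω').map (MulAut.conj κ).toMonoidHom ≤ sectionsAt H x := by
  rw [Subgroup.map_le_iff_le_comap, lGroup, Subgroup.closure_le, Set.insert_subset_iff,
    Set.singleton_subset_iff]
  simpa using ⟨hX, hT⟩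

lemma mul_self_mem_squares_lGroup (s t : Fin 3) (ω : ℕ → Fin 3) :
    (aAut * gAut s ω) * (aAut * gAut s ω) ∈ squaresSubgroup (lGroup s t ω) ∧
    (aAut * gAut s ω * gAut t ω) * (aAut * gAut s ω * gAut t ω) ∈
      squaresSubgroup (lGroup s t ω) ∧
    (gAut t ω * aAut * gAut s ω * gAut t ω) * (gAut t ω * aAut * gAut s ω * gAut t ω) ∈
      squaresSubgroup (lGroup s t ω) := by
  have hX : aAut * gAut s ω ∈ lGroup s t ω := Subgroup.subset_closure (by simp)
  have hT : gAut t ω ∈ lGroup s t ω := Subgroup.subset_closure (by simp)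
  refine ⟨mul_self_mem_squaresSubgroup hX, mul_self_mem_squaresSubgroup (mul_mem hX hT),
    mul_self_mem_squaresSubgroup ?_⟩
  simpa [mul_assoc] using mul_mem hT (mul_mem hX hT)

lemma exists_map_lGroup_shift_le_sectionsAt_of_eq_right (hst : s ≠ t) (h0 : ω 0 = t)
    (x : Bool) : ∃ κ, (lGroup s t (shift 1 ω)).map (MulAut.conj κ).toMonoidHom ≤
      sectionsAt (squaresSubgroup (lGroup s t ω)) x := by
  obtain ⟨hX, hXT, -⟩ := mul_self_mem_squares_lGroup s t ω
  cases x
  -- With `g' = g_{σω}`, the sections at `0` of `(a g_s)²` and `(a g_s g_t)²` are `g'_s a` and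
  -- `g'_s g'_t a`: the generators `a g'_s`, `g'_t` conjugated by `g'_s`.
  · refine ⟨gAut s (shift 1 ω), lGroup_map_conj_le_sectionsAt ⟨_, hX, fun w => ?_⟩
      ⟨_, mul_mem hXT (inv_mem hX), fun w => ?_⟩⟩ <;> simp [h0, hst.symm]
  · refine ⟨1, lGroup_map_conj_le_sectionsAt ⟨_, hX, fun w => ?_⟩
      ⟨_, mul_mem (inv_mem hX) hXT, fun w => ?_⟩⟩ <;> simp [h0, hst.symm]

lemma map_lGroup_shift_le_sectionsAt_of_eq_left (hst : s ≠ t) (h0 : ω 0 = s) (x : Bool) :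
    (lGroup t s (shift 1 ω)).map (MulAut.conj 1).toMonoidHom ≤
      sectionsAt (squaresSubgroup (lGroup s t ω)) x := by
  obtain ⟨hX, hXT, hTXT⟩ := mul_self_mem_squares_lGroup s t ω
  cases x
  · refine lGroup_map_conj_le_sectionsAt ⟨_, inv_mem (mul_mem hX hXT), fun w => ?_⟩
      ⟨_, hX, fun w => ?_⟩ <;> simp [h0, hst]
  · refine lGroup_map_conj_le_sectionsAt ⟨_, mul_mem hXT hTXT, fun w => ?_⟩
      ⟨_, hX, fun w => ?_⟩ <;> simp [h0, hst]

lemma map_lGroup_shift_le_sectionsAt_of_ne (hs : ω 0 ≠ s) (ht : ω 0 ≠ t) (hst : s ≠ t)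
    (x : Bool) :
    (lGroup s (ω 0) (shift 1 ω)).map (MulAut.conj 1).toMonoidHom ≤
      sectionsAt (squaresSubgroup (lGroup s t ω)) x := by
  obtain ⟨hX, hXT, hTXT⟩ := mul_self_mem_squares_lGroup s t ω
  have hst' := ap_gAut_gAut_of_ne s t (ω 0) hst hs.symm ht.symm (shift 1 ω)
  cases x
  · refine lGroup_map_conj_le_sectionsAt ⟨_, hTXT, fun w => ?_⟩
      ⟨_, hXT, fun w => ?_⟩ <;> simp [hs, ht, hst']
  · refine lGroup_map_conj_le_sectionsAt ⟨_, hX, fun w => ?_⟩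
      ⟨_, hXT, fun w => ?_⟩ <;> simp [hs, ht, hst']

lemma exists_map_lGroup_shift_le_sectionsAt (hst : s ≠ t) (ω : ℕ → Fin 3) (x : Bool) :
    ∃ s' t' κ, s' ≠ t' ∧ (lGroup s' t' (shift 1 ω)).map (MulAut.conj κ).toMonoidHom ≤
      sectionsAt (squaresSubgroup (lGroup s t ω)) x := by
  by_cases ht : ω 0 = t
  · obtain ⟨κ, hκ⟩ := exists_map_lGroup_shift_le_sectionsAt_of_eq_right hst ht x
    exact ⟨s, t, κ, hst, hκ⟩
  by_cases hs : ω 0 = s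
  · exact ⟨t, s, 1, hst.symm, map_lGroup_shift_le_sectionsAt_of_eq_left hst hs x⟩
  · exact ⟨s, ω 0, 1, Ne.symm hs, map_lGroup_shift_le_sectionsAt_of_ne hs ht hst x⟩

end Lift

lemma exists_mem_iterate_squaresSubgroup_swapsChildren {s t : Fin 3} (hst : s ≠ t)
    (ω : ℕ → Fin 3) (u : Word) {n : ℕ} (hn : n ≤ u.length) :
    ∃ h ∈ squaresSubgroup^[n] (lGroup s t ω), SwapsChildren h u := by
  obtain ⟨N, hN⟩ : ∃ N, u.length = N := ⟨_, rfl⟩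
  induction N generalizing s t ω u n with
  | zero =>
    obtain rfl := List.eq_nil_of_length_eq_zero hN
    obtain rfl : n = 0 := by omega
    exact ⟨aAut * gAut s ω, Subgroup.subset_closure (by simp), fun c => by cases c <;> simp⟩
  | succ N ih =>
    obtain ⟨x, u, rfl⟩ := List.exists_cons_of_length_eq_add_one hN
    obtain ⟨s', t', κ, hst', hmap⟩ := exists_map_lGroup_shift_le_sectionsAt hst ω x
    obtain ⟨l, hl, hswap⟩ := ih hst' (shift 1 ω) (ap κ⁻¹ u) (n := n - 1)
      (by rw [length_ap]; rw [List.length_cons] at hn; omega) (by simpa using hN)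
    obtain ⟨h, hh, hsec⟩ := map_iterate_squaresSubgroup_le_sectionsAt hmap (n - 1)
      (Subgroup.mem_map_of_mem _ hl)
    rw [← Function.iterate_succ_apply] at hh
    exact ⟨h, antitone_iterate_squaresSubgroup _ (by omega) hh, (hswap.conj κ).cons hsec⟩

/-- for every `ω ∈ Ω`, every `n` and every word `v` of length `n`,
`L_{n,ω}` acts level transitively on the subtree `vX*`. -/
theorem statement9 (ω : ℕ → Fin 3) (n : ℕ) (v : Word) (hv : v.length = n) :
    LevelTransitiveOn (↑(Lsq ω n) : Set ↥TreeAut) v := by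
  rw [Lsq_eq_iterate_squaresSubgroup]
  refine LevelTransitiveOn.of_swapsChildren fun u => ?_
  exact exists_mem_iterate_squaresSubgroup_swapsChildren (by decide) ω (v ++ u) (by simp [hv])
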